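/- Applying the Kalman filter update to the one-dimensional generating function G(x) = x − μ_ψ with constant covariance function C_GG ≡ C_ψψ, with a single observation that G(μ_ε) = 0 with observation variance C_εε, yields the filtered generating function G^a(x) = x − μ_ψ − (C_ψψ/(C_εε + C_ψψ))(μ_ε − μ_ψ). Its zero-level set is the point x = μ_ψ + (C_ψψ/(C_εε + C_ψψ))(μ_ε − μ_ψ), which coincides with the geometric (optimal interpolation) solution. -/
import Mathlib

/-- Kalman update of the one-dimensional generating function `G(x) = x - μψ` with constant
covariance kernel `Cψψ`, given a single observation `G(με) = 0` with observation variance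
`Cεε`: the filtered generating function is `x ↦ x - μψ - (Cψψ/(Cεε+Cψψ))(με - μψ)`, and its
zero-level set is exactly the geometric (optimal interpolation) solution. -/
theorem analytic_level_set_update
    (μψ με Cψψ Cεε : ℝ) (hC : 0 < Cψψ) (hE : 0 < Cεε) :
    (∀ x : ℝ,
      (x - μψ) + Cψψ * (Cεε + Cψψ)⁻¹ * (0 - (με - μψ))
        = x - μψ - (Cψψ / (Cεε + Cψψ)) * (με - μψ)) ∧
    (∀ x : ℝ,
      (x - μψ) + Cψψ * (Cεε + Cψψ)⁻¹ * (0 - (με - μψ)) = 0 ↔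
        x = μψ + (Cψψ / (Cεε + Cψψ)) * (με - μψ)) := by
  constructor
  · intro x; ring
  · intro x
    constructor
    · intro h; field_simp at h ⊢; linarith
    · intro h; rw [h]; ring
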